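/- Let k₀ > 0 and z ∈ ℂ with Im z ≠ 0, and let h = -∂² + 2k₀²/cos²(k₀(x - z)). The functions ψ(x) = 1/cos(k₀(x - z)) and φ(x) = (1/(2k₀²))·cos(k₀(x - z)) satisfy h ψ = k₀² ψ and (h - k₀²)φ = ψ on ℝ, so φ is an associated function of first order for h at the spectral value k₀². -/

import Mathlib

/-- The complex singular Hamiltonian `h = -∂² + 2k₀²/cos²(k₀(x - z))`. -/
noncomputable def hTan (k₀ : ℝ) (z : ℂ) (f : ℝ → ℂ) : ℝ → ℂ :=
  fun x => -(deriv (deriv f) x)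
    + 2 * (k₀ : ℂ) ^ 2 / Complex.cos ((k₀ : ℂ) * ((x : ℂ) - z)) ^ 2 * f x

/-! With `c = cos (k (x - z))` and `s = sin (k (x - z))`, one has `c'' = -k² c` and, using
`s² + c² = 1`, `(1/c)'' = k² (2/c³ - 1/c)`; both identities are then field arithmetic in `c`.
For real `k ≠ 0` and `Im z ≠ 0` the argument `k (x - z)` is never real, so it misses the zeros
`(2n+1)π/2` of `cos` and `c` never vanishes on `ℝ`. -/

open Complex

section
variable (k z : ℂ)

lemma hasDerivAt_mul_sub (w : ℂ) : HasDerivAt (fun w : ℂ => k * (w - z)) k w := by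
  simpa using ((hasDerivAt_id w).sub_const z).const_mul k

lemma hasDerivAt_cos_mul_sub (x : ℝ) :
    HasDerivAt (fun y : ℝ => cos (k * (y - z))) (-sin (k * (x - z)) * k) x :=
  ((hasDerivAt_cos _).comp (x : ℂ) (hasDerivAt_mul_sub k z x)).comp_ofReal

lemma hasDerivAt_sin_mul_sub (x : ℝ) :
    HasDerivAt (fun y : ℝ => sin (k * (y - z))) (cos (k * (x - z)) * k) x :=
  ((hasDerivAt_sin _).comp (x : ℂ) (hasDerivAt_mul_sub k z x)).comp_ofReal

lemma deriv_deriv_const_mul_cos_mul_sub (a : ℂ) (x : ℝ) :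
    deriv (deriv fun y : ℝ => a * cos (k * (y - z))) x = -k ^ 2 * (a * cos (k * (x - z))) := by
  have h₁ : deriv (fun y : ℝ => a * cos (k * (y - z)))
      = fun y : ℝ => a * (-sin (k * (y - z)) * k) :=
    funext fun y => ((hasDerivAt_cos_mul_sub k z y).const_mul a).deriv
  have h₂ : HasDerivAt (fun y : ℝ => a * (-sin (k * (y - z)) * k)) _ x :=
    ((hasDerivAt_sin_mul_sub k z x).neg.mul_const k).const_mul a
  rw [h₁, h₂.deriv]
  ring

lemma deriv_deriv_inv_cos_mul_sub (hc : ∀ x : ℝ, cos (k * (x - z)) ≠ 0) (x : ℝ) :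
    deriv (deriv fun y : ℝ => 1 / cos (k * (y - z))) x
      = k ^ 2 * (2 / cos (k * (x - z)) ^ 3 - 1 / cos (k * (x - z))) := by
  have h₁ : deriv (fun y : ℝ => 1 / cos (k * (y - z)))
      = fun y : ℝ => k * sin (k * (y - z)) / cos (k * (y - z)) ^ 2 := by
    funext y
    have h : HasDerivAt (fun y : ℝ => 1 / cos (k * (y - z))) _ y :=
      (hasDerivAt_const (y : ℝ) (1 : ℂ)).div (hasDerivAt_cos_mul_sub k z y) (hc y)
    rw [h.deriv]
    ring
  have h₂ : HasDerivAt (fun y : ℝ => k * sin (k * (y - z)) / cos (k * (y - z)) ^ 2) _ x :=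
    ((hasDerivAt_sin_mul_sub k z x).const_mul k).div
      ((hasDerivAt_cos_mul_sub k z x).pow 2) (pow_ne_zero 2 (hc x))
  rw [h₁, h₂.deriv]
  have hcx := hc x
  field_simp
  linear_combination (2 * k ^ 2 * cos (k * (x - z))) * sin_sq_add_cos_sq (k * (x - z))
end

lemma cos_ofReal_mul_sub_ne_zero {k : ℝ} (hk : k ≠ 0) {z : ℂ} (hz : z.im ≠ 0) (x : ℝ) :
    cos (k * (x - z)) ≠ 0 := by
  intro h
  obtain ⟨n, hn⟩ := cos_eq_zero_iff.1 h
  simpa [hk, hz] using congrArg im hn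

/-- `ψ = 1/cos(k₀(x-z))` is an eigenfunction of `h` at `k₀²`, and
`φ = cos(k₀(x-z))/(2k₀²)` is an associated function of first order:
`(h - k₀²) φ = ψ`. -/
theorem stmt_11 (k₀ : ℝ) (z : ℂ) (hk₀ : 0 < k₀) (hz : z.im ≠ 0) :
    (∀ x : ℝ, hTan k₀ z (fun y => 1 / Complex.cos ((k₀ : ℂ) * ((y : ℂ) - z))) x
      = (k₀ : ℂ) ^ 2 * (1 / Complex.cos ((k₀ : ℂ) * ((x : ℂ) - z)))) ∧
    (∀ x : ℝ, hTan k₀ z (fun y => (1 / (2 * (k₀ : ℂ) ^ 2)) *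
          Complex.cos ((k₀ : ℂ) * ((y : ℂ) - z))) x
        - (k₀ : ℂ) ^ 2 * ((1 / (2 * (k₀ : ℂ) ^ 2)) *
          Complex.cos ((k₀ : ℂ) * ((x : ℂ) - z)))
      = 1 / Complex.cos ((k₀ : ℂ) * ((x : ℂ) - z))) := by
  have hc := cos_ofReal_mul_sub_ne_zero hk₀.ne' hz
  have hk : (k₀ : ℂ) ≠ 0 := ofReal_ne_zero.2 hk₀.ne'
  refine ⟨fun x => ?_, fun x => ?_⟩
  · have hcx := hc x
    rw [hTan, deriv_deriv_inv_cos_mul_sub _ _ hc]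
    field_simp
    ring
  · rw [hTan, deriv_deriv_const_mul_cos_mul_sub]
    field_simp
    ring
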